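/- arXiv:2005.13101 — 4 statements merged into one kernel-verified Lean document; each statement's English description precedes it below -/
import Mathlib

section
/- Let e : ℝ → ℝ² (Euclidean space) be differentiable and let λ, Ā, W̄ > 0 with Λ := λ - 2Ā > 0. Suppose that for all t ≥ 0, ⟪e(t), e'(t)⟫ ≤ -(λ/2)‖e(t)‖² + ‖e(t)‖(Ā‖e(t)‖ + W̄). If ‖e(0)‖ ≤ B_r := 2W̄/Λ, then ‖e(t)‖ ≤ B_r for all t ≥ 0; that is, the ball of radius B_r = 2W̄/Λ is forward invariant for the tracking error (Theorem 1, uniform ultimate boundedness). -/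
open RealInnerProductSpace

/-!
The dissipation inequality reads `⟪e, e'⟫ ≤ -(Λ/2)‖e‖² + W‖e‖`. Put `R = 2W/Λ`.
Since `2W = ΛR`, this and `2Rr ≤ r² + R²` give
`(‖e‖² - R²)' = 2⟪e, e'⟫ ≤ -Λ‖e‖² + ΛR‖e‖ ≤ -(Λ/2)(‖e‖² - R²)`,
so by Grönwall's inequality `‖e‖² - R²` stays nonpositive once it is nonpositive.
-/

theorem nonpos_of_hasDerivAt_le_mul {f f' : ℝ → ℝ} {K a x : ℝ}
    (hf : ∀ y, HasDerivAt f (f' y) y) (bound : ∀ y ≥ a, f' y ≤ K * f y) (ha : f a ≤ 0)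
    (hx : a ≤ x) : f x ≤ 0 := by
  have hslope : ∀ y ∈ Set.Ico a x, ∀ r, f' y < r →
      ∃ᶠ z in nhdsWithin y (Set.Ioi y), (z - y)⁻¹ * (f z - f y) < r := fun y _ r hr =>
    (hf y).hasDerivWithinAt.liminf_right_slope_le hr |>.mono fun z hz => by
      rwa [slope_def_field, div_eq_inv_mul] at hz
  have := le_gronwallBound_of_liminf_deriv_right_le (δ := 0) (ε := 0)
    (fun y _ => (hf y).continuousAt.continuousWithinAt) hslope ha
    (fun y hy => by simpa using bound y hy.1) x ⟨hx, le_rfl⟩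
  rwa [gronwallBound_ε0_δ0] at this

theorem norm_le_of_inner_deriv_le {E : Type*} [NormedAddCommGroup E] [InnerProductSpace ℝ E]
    {e : ℝ → E} {c W a t : ℝ} (hc : 0 < c) (he : Differentiable ℝ e)
    (hineq : ∀ s ≥ a, ⟪e s, deriv e s⟫ ≤ -(c / 2) * ‖e s‖ ^ 2 + W * ‖e s‖)
    (ha : ‖e a‖ ≤ 2 * W / c) (ht : a ≤ t) : ‖e t‖ ≤ 2 * W / c := by
  set R := 2 * W / c
  have hR : 0 ≤ R := (norm_nonneg _).trans ha
  have hW : W = c / 2 * R := by simp only [R]; field_simp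
  have hsq : ‖e t‖ ^ 2 - R ^ 2 ≤ 0 := by
    refine nonpos_of_hasDerivAt_le_mul (f := fun s => ‖e s‖ ^ 2 - R ^ 2) (K := -(c / 2))
      (fun s => ((he s).hasDerivAt.norm_sq).sub_const _) (fun s hs => ?_) ?_ ht
    · calc 2 * ⟪e s, deriv e s⟫ ≤ 2 * (-(c / 2) * ‖e s‖ ^ 2 + W * ‖e s‖) := by
            linarith [hineq s hs]
        _ = -(c / 2) * (‖e s‖ ^ 2 - R ^ 2) - c / 2 * (‖e s‖ - R) ^ 2 := by rw [hW]; ring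
        _ ≤ -(c / 2) * (‖e s‖ ^ 2 - R ^ 2) := by
            linarith [mul_nonneg (half_pos hc).le (sq_nonneg (‖e s‖ - R))]
    · nlinarith [norm_nonneg (e a)]
  exact (sq_le_sq₀ (norm_nonneg _) hR).1 (by linarith)

theorem rclf_ball_forward_invariant_general
    (lam A W : ℝ)
    (hΛ : 0 < lam - 2 * A)
    (e : ℝ → EuclideanSpace ℝ (Fin 2)) (hdiff : Differentiable ℝ e)
    (hdiss : ∀ t ≥ (0:ℝ),
      ⟪e t, deriv e t⟫ ≤ -(lam / 2) * ‖e t‖ ^ 2 + ‖e t‖ * (A * ‖e t‖ + W))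
    (h0 : ‖e 0‖ ≤ 2 * W / (lam - 2 * A)) :
    ∀ t ≥ (0:ℝ), ‖e t‖ ≤ 2 * W / (lam - 2 * A) := fun _ ht =>
  norm_le_of_inner_deriv_le hΛ hdiff (fun s hs => by linear_combination hdiss s hs) h0 ht

/-- Theorem 1, uniform ultimate boundedness: Under the pointwise min-norm
control law, along the tracking-error trajectory satisfying the dissipation inequality
`⟪e, e'⟫ ≤ -(λ/2)‖e‖² + ‖e‖(Ā‖e‖ + W̄)` with `Λ = λ - 2Ā > 0`, the ball of radius
`B_r = 2W̄/Λ` is forward invariant: if `‖e 0‖ ≤ B_r` then `‖e t‖ ≤ B_r` for all `t ≥ 0`. -/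
theorem rclf_ball_forward_invariant
    (lam A W : ℝ) (hlam : 0 < lam) (hA : 0 < A) (hW : 0 < W)
    (hΛ : 0 < lam - 2 * A)
    (e : ℝ → EuclideanSpace ℝ (Fin 2)) (hdiff : Differentiable ℝ e)
    (hdiss : ∀ t ≥ (0:ℝ),
      ⟪e t, deriv e t⟫ ≤ -(lam / 2) * ‖e t‖ ^ 2 + ‖e t‖ * (A * ‖e t‖ + W))
    (h0 : ‖e 0‖ ≤ 2 * W / (lam - 2 * A)) :
    ∀ t ≥ (0:ℝ), ‖e t‖ ≤ 2 * W / (lam - 2 * A) :=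
  rclf_ball_forward_invariant_general lam A W hΛ e hdiff hdiss h0
end

section
/- Let e : ℝ → ℝ² (Euclidean space) be differentiable, let λ, Ā, W̄ > 0 with Λ := λ - 2Ā > 0, and let K_r be a robust gain with 0 < K_r < W̄. Suppose that for all t ≥ 0 the robust closed-loop dissipation inequality ⟪e(t), e'(t)⟫ ≤ -(λ/2)‖e(t)‖² + ‖e(t)‖(Ā‖e(t)‖ + W̄) - K_r‖e(t)‖ holds. Then for every t ≥ 0 with ‖e(t)‖ > 2(W̄ - K_r)/Λ, the function V(t) := ½‖e(t)‖² has strictly negative derivative at t, i.e., d/dt V(t) ≤ -(Λ/2)‖e(t)‖² + (W̄ - K_r)‖e(t)‖ < 0. -/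
open RealInnerProductSpace

/-! The derivative of `V = ½‖e‖²` is `⟪e, e'⟫`, and the dissipation inequality rewrites
exactly as `⟪e, e'⟫ ≤ -(Λ/2)‖e‖² + (W̄ - K_r)‖e‖`. The right-hand side is `‖e‖` times
`(W̄ - K_r) - (Λ/2)‖e‖`, which is negative precisely outside the ball of radius
`2(W̄ - K_r)/Λ`. -/

theorem deriv_half_norm_sq {F : Type*} [NormedAddCommGroup F] [InnerProductSpace ℝ F]
    {f : ℝ → F} {t : ℝ} (hf : DifferentiableAt ℝ f t) :
    deriv (fun s => (1 / 2 : ℝ) * ‖f s‖ ^ 2) t = ⟪f t, deriv f t⟫ := by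
  rw [(hf.hasDerivAt.norm_sq.const_mul (1 / 2 : ℝ)).deriv]
  ring

theorem neg_mul_sq_add_mul_neg_of_div_lt {Λ c x : ℝ} (hΛ : 0 < Λ) (hc : 0 ≤ c)
    (hx : 2 * c / Λ < x) : -(Λ / 2) * x ^ 2 + c * x < 0 := by
  have hx_pos : 0 < x := (div_nonneg (by linarith) hΛ.le).trans_lt hx
  have hcx : 2 * c < Λ * x := by rwa [div_lt_iff₀' hΛ] at hx
  nlinarith

theorem robust_rclf_strictly_negative_outside_ball_general
    (lam A W Kr : ℝ)
    (hΛ : 0 < lam - 2 * A) (hKrW : Kr < W)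
    (e : ℝ → EuclideanSpace ℝ (Fin 2)) (hdiff : Differentiable ℝ e)
    (hdiss : ∀ t ≥ (0:ℝ),
      ⟪e t, deriv e t⟫ ≤ -(lam / 2) * ‖e t‖ ^ 2 + ‖e t‖ * (A * ‖e t‖ + W) - Kr * ‖e t‖) :
    ∀ t ≥ (0:ℝ), 2 * (W - Kr) / (lam - 2 * A) < ‖e t‖ →
      deriv (fun s => (1 / 2 : ℝ) * ‖e s‖ ^ 2) t ≤
        -((lam - 2 * A) / 2) * ‖e t‖ ^ 2 + (W - Kr) * ‖e t‖ ∧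
      -((lam - 2 * A) / 2) * ‖e t‖ ^ 2 + (W - Kr) * ‖e t‖ < 0 := by
  intro t ht hball
  refine ⟨?_, neg_mul_sq_add_mul_neg_of_div_lt hΛ (sub_nonneg.mpr hKrW.le) hball⟩
  rw [deriv_half_norm_sq (hdiff t)]
  calc ⟪e t, deriv e t⟫
      ≤ -(lam / 2) * ‖e t‖ ^ 2 + ‖e t‖ * (A * ‖e t‖ + W) - Kr * ‖e t‖ := hdiss t ht
    _ = -((lam - 2 * A) / 2) * ‖e t‖ ^ 2 + (W - Kr) * ‖e t‖ := by ring

/-- inside Theorem 2, Case 1: Under the robust pointwise min-norm control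
law with robust gain `0 < K_r < W̄`, along the tracking-error trajectory satisfying
`⟪e, e'⟫ ≤ -(λ/2)‖e‖² + ‖e‖(Ā‖e‖ + W̄) - K_r‖e‖`, whenever `‖e t‖ > 2(W̄ - K_r)/Λ`
(with `Λ = λ - 2Ā > 0`), the Lyapunov function `V = ½‖e‖²` has strictly negative
derivative: `V' ≤ -(Λ/2)‖e‖² + (W̄ - K_r)‖e‖ < 0`. -/
theorem robust_rclf_strictly_negative_outside_ball
    (lam A W Kr : ℝ) (hlam : 0 < lam) (hA : 0 < A) (hW : 0 < W)
    (hΛ : 0 < lam - 2 * A) (hKr0 : 0 < Kr) (hKrW : Kr < W)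
    (e : ℝ → EuclideanSpace ℝ (Fin 2)) (hdiff : Differentiable ℝ e)
    (hdiss : ∀ t ≥ (0:ℝ),
      ⟪e t, deriv e t⟫ ≤ -(lam / 2) * ‖e t‖ ^ 2 + ‖e t‖ * (A * ‖e t‖ + W) - Kr * ‖e t‖) :
    ∀ t ≥ (0:ℝ), 2 * (W - Kr) / (lam - 2 * A) < ‖e t‖ →
      deriv (fun s => (1 / 2 : ℝ) * ‖e s‖ ^ 2) t ≤
        -((lam - 2 * A) / 2) * ‖e t‖ ^ 2 + (W - Kr) * ‖e t‖ ∧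
      -((lam - 2 * A) / 2) * ‖e t‖ ^ 2 + (W - Kr) * ‖e t‖ < 0 :=
  robust_rclf_strictly_negative_outside_ball_general lam A W Kr hΛ hKrW e hdiff hdiss
end

section
/- (Theorem 2, Case 1: uniform ultimate boundedness.) Let e : ℝ → ℝ² (Euclidean space) be differentiable, let λ, Ā, W̄ > 0 with Λ := λ - 2Ā > 0, and let 0 < K_r < W̄. Suppose that for all t ≥ 0, ⟪e(t), e'(t)⟫ ≤ -(λ/2)‖e(t)‖² + ‖e(t)‖(Ā‖e(t)‖ + W̄) - K_r‖e(t)‖. If ‖e(0)‖ ≤ B_rob := 2(W̄ - K_r)/Λ, then ‖e(t)‖ ≤ B_rob for all t ≥ 0; in particular, the robust term with gain K_r strictly shrinks the ultimate bound from 2W̄/Λ to 2(W̄ - K_r)/Λ. -/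
open RealInnerProductSpace

/-!
Writing `n = ‖e t‖`, `Λ = λ - 2Ā` and `B = 2(W̄ - K_r)/Λ`, the right-hand side of the
dissipation inequality factors as `-(Λ/2) n (n - B)`, so `d/dt ‖e‖² = 2⟪e, e'⟫ < 0` whenever
`‖e‖ > B`. A fencing argument against the constant barrier `B² + ε` then keeps `‖e‖²` below
`B²` forever.
-/

open Set in
theorem image_le_of_deriv_neg_above {f f' : ℝ → ℝ} {C : ℝ} (hf : ∀ x, HasDerivAt f (f' x) x)
    (hneg : ∀ x ≥ 0, C < f x → f' x < 0) (h0 : f 0 ≤ C) : ∀ t ≥ 0, f t ≤ C := by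
  intro t ht
  refine le_of_forall_pos_le_add fun ε hε => ?_
  have barrier := image_le_of_deriv_right_lt_deriv_boundary (a := 0) (b := t)
    (B := fun _ => C + ε) (B' := 0)
    (fun x _ => (hf x).continuousAt.continuousWithinAt) (fun x _ => (hf x).hasDerivWithinAt)
    (by linarith) (fun x => hasDerivAt_const x _)
    (fun x hx hfx => hneg x hx.1 (by linarith))
  exact barrier (right_mem_Icc.mpr ht)

theorem norm_le_of_inner_deriv_neg_outside_ball {E : Type*} [NormedAddCommGroup E]
    [InnerProductSpace ℝ E] {e : ℝ → E} {R : ℝ} (hdiff : Differentiable ℝ e)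
    (hneg : ∀ t ≥ 0, R < ‖e t‖ → ⟪e t, deriv e t⟫ < 0) (h0 : ‖e 0‖ ≤ R) :
    ∀ t ≥ 0, ‖e t‖ ≤ R := by
  have hR : 0 ≤ R := (norm_nonneg _).trans h0
  have hsq : ∀ t ≥ 0, ‖e t‖ ^ 2 ≤ R ^ 2 := by
    refine image_le_of_deriv_neg_above (fun x => (hdiff x).hasDerivAt.norm_sq)
      (fun x hx hgt => ?_) (pow_le_pow_left₀ (norm_nonneg _) h0 2)
    have hout : R < ‖e x‖ := lt_of_pow_lt_pow_left₀ 2 (norm_nonneg _) hgt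
    linarith [hneg x hx hout]
  exact fun t ht => (pow_le_pow_iff_left₀ (norm_nonneg _) hR two_ne_zero).mp (hsq t ht)

theorem dissipation_rhs_eq_factored (lam A W Kr n : ℝ) (hΛ : lam - 2 * A ≠ 0) :
    -(lam / 2) * n ^ 2 + n * (A * n + W) - Kr * n =
      -((lam - 2 * A) / 2) * n * (n - 2 * (W - Kr) / (lam - 2 * A)) := by
  field_simp
  ring

theorem dissipation_rhs_neg_outside_ball {lam A W Kr n : ℝ} (hΛ : 0 < lam - 2 * A)
    (hn : 0 < n) (hout : 2 * (W - Kr) / (lam - 2 * A) < n) :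
    -(lam / 2) * n ^ 2 + n * (A * n + W) - Kr * n < 0 := by
  rw [dissipation_rhs_eq_factored lam A W Kr n hΛ.ne']
  exact mul_neg_of_neg_of_pos (mul_neg_of_neg_of_pos (by linarith) hn) (by linarith)

theorem robust_rclf_ball_forward_invariant_general
    (lam A W Kr : ℝ)
    (hΛ : 0 < lam - 2 * A) (hKr0 : 0 < Kr)
    (e : ℝ → EuclideanSpace ℝ (Fin 2)) (hdiff : Differentiable ℝ e)
    (hdiss : ∀ t ≥ (0:ℝ),
      ⟪e t, deriv e t⟫ ≤ -(lam / 2) * ‖e t‖ ^ 2 + ‖e t‖ * (A * ‖e t‖ + W) - Kr * ‖e t‖)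
    (h0 : ‖e 0‖ ≤ 2 * (W - Kr) / (lam - 2 * A)) :
    (∀ t ≥ (0:ℝ), ‖e t‖ ≤ 2 * (W - Kr) / (lam - 2 * A)) ∧
    2 * (W - Kr) / (lam - 2 * A) < 2 * W / (lam - 2 * A) := by
  have hB : 0 ≤ 2 * (W - Kr) / (lam - 2 * A) := (norm_nonneg _).trans h0
  refine ⟨norm_le_of_inner_deriv_neg_outside_ball hdiff (fun t ht hout => ?_) h0, ?_⟩
  · exact (hdiss t ht).trans_lt
      (dissipation_rhs_neg_outside_ball hΛ (hB.trans_lt hout) hout)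
  · rw [div_lt_div_iff_of_pos_right hΛ]
    linarith

/-- Theorem 2, Case 1: uniform ultimate boundedness: Under the robust
pointwise min-norm control law with robust gain `0 < K_r < W̄`, along the tracking-error
trajectory satisfying `⟪e, e'⟫ ≤ -(λ/2)‖e‖² + ‖e‖(Ā‖e‖ + W̄) - K_r‖e‖` with
`Λ = λ - 2Ā > 0`, the ball of radius `B_rob = 2(W̄ - K_r)/Λ` is forward invariant:
if `‖e 0‖ ≤ B_rob` then `‖e t‖ ≤ B_rob` for all `t ≥ 0`. In particular the robust term
strictly shrinks the ultimate bound from `2W̄/Λ` to `2(W̄ - K_r)/Λ`. -/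
theorem robust_rclf_ball_forward_invariant
    (lam A W Kr : ℝ) (hlam : 0 < lam) (hA : 0 < A) (hW : 0 < W)
    (hΛ : 0 < lam - 2 * A) (hKr0 : 0 < Kr) (hKrW : Kr < W)
    (e : ℝ → EuclideanSpace ℝ (Fin 2)) (hdiff : Differentiable ℝ e)
    (hdiss : ∀ t ≥ (0:ℝ),
      ⟪e t, deriv e t⟫ ≤ -(lam / 2) * ‖e t‖ ^ 2 + ‖e t‖ * (A * ‖e t‖ + W) - Kr * ‖e t‖)
    (h0 : ‖e 0‖ ≤ 2 * (W - Kr) / (lam - 2 * A)) :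
    (∀ t ≥ (0:ℝ), ‖e t‖ ≤ 2 * (W - Kr) / (lam - 2 * A)) ∧
    2 * (W - Kr) / (lam - 2 * A) < 2 * W / (lam - 2 * A) :=
  robust_rclf_ball_forward_invariant_general lam A W Kr hΛ hKr0 e hdiff hdiss h0
end

section
/- (Theorem 2, Case 1: ultimate bound in the limit.) Let e : ℝ → ℝ² (Euclidean space) be differentiable, let λ, Ā, W̄ > 0 with Λ := λ - 2Ā, Λ̄ := Λ - 1 > 0, and let 0 < K_r < W̄. Suppose that for all t ≥ 0, ⟪e(t), e'(t)⟫ ≤ -(λ/2)‖e(t)‖² + ‖e(t)‖(Ā‖e(t)‖ + W̄) - K_r‖e(t)‖. Then for every ε > 0 there exists T ≥ 0 such that ‖e(t)‖ ≤ (W̄ - K_r)/√Λ̄ + ε for all t ≥ T. -/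
/-!
With `V = ‖e‖²` and `Λ̄ = λ - 2Ā - 1`, the dissipation inequality and AM–GM
`2‖e‖(W̄ - K_r) ≤ ‖e‖² + (W̄ - K_r)²` give the linear differential inequality
`V' ≤ -Λ̄ (V - s²)` with `s = (W̄ - K_r)/√Λ̄`. Hence `exp(Λ̄ t) (V t - s²)` is antitone, so
`V t - s²` decays exponentially and `V` eventually drops below `(s + ε)²`.
-/

open RealInnerProductSpace Filter Topology Real

theorem sub_le_mul_exp_of_hasDerivAt_le {V V' : ℝ → ℝ} {L a : ℝ}
    (hcont : ContinuousOn V (Set.Ici 0)) (hV : ∀ t > 0, HasDerivAt V (V' t) t)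
    (hV' : ∀ t > 0, V' t ≤ -L * (V t - a)) {t : ℝ} (ht : 0 ≤ t) :
    V t - a ≤ (V 0 - a) * exp (-(L * t)) := by
  set g := fun t => exp (L * t) * (V t - a)
  have hg : ∀ t > 0, HasDerivAt g (exp (L * t) * L * (V t - a) + exp (L * t) * V' t) t :=
    fun t ht => (((hasDerivAt_id t).const_mul L).exp.congr_deriv (by simp)).mul
      ((hV t ht).sub_const a)
  have hanti : AntitoneOn g (Set.Ici 0) := by
    refine antitoneOn_of_hasDerivWithinAt_nonpos (convex_Ici 0)
      (f' := fun t => exp (L * t) * L * (V t - a) + exp (L * t) * V' t)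
      ((continuous_const.mul continuous_id).rexp.continuousOn.mul (hcont.sub continuousOn_const))
      (fun t ht => ?_) (fun t ht => ?_) <;> rw [interior_Ici] at ht
    · exact (hg t ht).hasDerivWithinAt
    · nlinarith [exp_pos (L * t), hV' t ht]
  have hgt : exp (L * t) * (V t - a) ≤ V 0 - a := by
    simpa [g] using hanti Set.self_mem_Ici ht ht
  rw [← le_div_iff₀' (exp_pos _)] at hgt
  rwa [exp_neg, ← div_eq_mul_inv]

theorem eventually_lt_add_of_sub_le_mul_exp {V : ℝ → ℝ} {L a K δ : ℝ} (hL : 0 < L)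
    (hV : ∀ t ≥ 0, V t - a ≤ K * exp (-(L * t))) (hδ : 0 < δ) :
    ∀ᶠ t in atTop, V t < a + δ := by
  have hdecay : Tendsto (fun t => K * exp (-(L * t))) atTop (𝓝 0) := by
    simpa using (tendsto_exp_neg_atTop_nhds_zero.comp
      (tendsto_id.const_mul_atTop hL)).const_mul K
  filter_upwards [hdecay.eventually_lt_const hδ, eventually_ge_atTop 0] with t hlt ht
  linarith [hV t ht]

theorem robust_rclf_uniform_ultimate_bound_general
    (lam A W Kr : ℝ)
    (hΛbar : 0 < lam - 2 * A - 1) (hKrW : Kr < W)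
    (e : ℝ → EuclideanSpace ℝ (Fin 2)) (hdiff : Differentiable ℝ e)
    (hdiss : ∀ t ≥ (0:ℝ),
      ⟪e t, deriv e t⟫ ≤ -(lam / 2) * ‖e t‖ ^ 2 + ‖e t‖ * (A * ‖e t‖ + W) - Kr * ‖e t‖) :
    ∀ ε > (0:ℝ), ∃ T ≥ (0:ℝ), ∀ t ≥ T,
      ‖e t‖ ≤ (W - Kr) / Real.sqrt (lam - 2 * A - 1) + ε := by
  intro ε hε
  set L := lam - 2 * A - 1
  set s := (W - Kr) / √L
  have hs : 0 ≤ s := div_nonneg (by linarith) (sqrt_nonneg _)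
  have hLs : L * s ^ 2 = (W - Kr) ^ 2 := by
    rw [div_pow, sq_sqrt hΛbar.le]; field_simp
  have hV : ∀ t, HasDerivAt (‖e ·‖ ^ 2) (2 * ⟪e t, deriv e t⟫) t :=
    fun t => (hdiff t).hasDerivAt.norm_sq
  have hV' : ∀ t > 0, 2 * ⟪e t, deriv e t⟫ ≤ -L * (‖e t‖ ^ 2 - s ^ 2) := fun t ht => by
    nlinarith [hdiss t ht.le, sq_nonneg (‖e t‖ - (W - Kr))]
  have hdecay := fun t (ht : t ≥ 0) => sub_le_mul_exp_of_hasDerivAt_le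
    (continuous_iff_continuousAt.2 fun t => (hV t).continuousAt).continuousOn
    (fun t _ => hV t) hV' ht
  obtain ⟨T, hT⟩ := eventually_atTop.1 <|
    eventually_lt_add_of_sub_le_mul_exp hΛbar hdecay (δ := 2 * s * ε + ε ^ 2) (by positivity)
  refine ⟨max T 0, le_max_right _ _, fun t ht => ?_⟩
  have hsq : ‖e t‖ ^ 2 < (s + ε) ^ 2 := by linarith [hT t (le_of_max_le_left ht)]
  exact (pow_lt_pow_iff_left₀ (norm_nonneg _) (by positivity) two_ne_zero).1 hsq |>.le

/-- Theorem 2, Case 1: ultimate bound in the limit: Under the robust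
pointwise min-norm control law with robust gain `0 < K_r < W̄`, along the tracking-error
trajectory satisfying `⟪e, e'⟫ ≤ -(λ/2)‖e‖² + ‖e‖(Ā‖e‖ + W̄) - K_r‖e‖` with
`Λ̄ = λ - 2Ā - 1 > 0`, for every `ε > 0` there exists `T ≥ 0` such that
`‖e t‖ ≤ (W̄ - K_r)/√Λ̄ + ε` for all `t ≥ T`. -/
theorem robust_rclf_uniform_ultimate_bound
    (lam A W Kr : ℝ) (hlam : 0 < lam) (hA : 0 < A) (hW : 0 < W)
    (hΛbar : 0 < lam - 2 * A - 1) (hKr0 : 0 < Kr) (hKrW : Kr < W)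
    (e : ℝ → EuclideanSpace ℝ (Fin 2)) (hdiff : Differentiable ℝ e)
    (hdiss : ∀ t ≥ (0:ℝ),
      ⟪e t, deriv e t⟫ ≤ -(lam / 2) * ‖e t‖ ^ 2 + ‖e t‖ * (A * ‖e t‖ + W) - Kr * ‖e t‖) :
    ∀ ε > (0:ℝ), ∃ T ≥ (0:ℝ), ∀ t ≥ T,
      ‖e t‖ ≤ (W - Kr) / Real.sqrt (lam - 2 * A - 1) + ε :=
  robust_rclf_uniform_ultimate_bound_general lam A W Kr hΛbar hKrW e hdiff hdiss
end
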